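/- Let N ≥ 2, let λ_1,…,λ_{N²−1} be N×N complex matrices that are Hermitian, traceless, satisfy Tr[λ_μ λ_ν] = 2δ_{μν}, and are such that every traceless Hermitian N×N matrix is a real linear combination of the λ_μ. Let ψ_1,…,ψ_{N²} be unit vectors in ℂ^N with |⟨ψ_i, ψ_j⟩|² = 1/(N+1) for all i ≠ j, let P_i be the rank-one projection onto ψ_i, and let r_i ∈ ℝ^{N²−1} be the vector with components (r_i)_μ = Tr[P_i λ_μ]. Then |r_i|² = 2(N−1)/N for every i, and r_i · r_j = −2/(N(N+1)) for all i ≠ j; consequently (r_i · r_j)/(|r_i|·|r_j|) = −1/(N²−1) for all i ≠ j, i.e., the normalized Bloch vectors r_i/|r_i| form a regular simplex in ℝ^{N²−1}. -/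

import Mathlib

open Matrix BigOperators

/-!
If `P` is Hermitian of trace one, `P - 1/N` is traceless Hermitian, so completeness and the
orthonormality `Tr(λ_μ λ_ν) = 2 δ_{μν}` give `P = 1/N + ½ ∑ r_μ λ_μ` with `r` the Bloch vector
of `P`. Hence `Tr(P Q) = 1/N + ½ r_P · r_Q` for any two such matrices. For the rank-one
projections of a SIC-POVM, `Tr(P_i P_j) = |⟨ψ_i, ψ_j⟩|²` is `1` for `i = j` and `1/(N+1)`
otherwise.
-/

namespace Matrix

theorem trace_smul_one_add_mul_smul_one_add {n R : Type*} [Fintype n] [DecidableEq n]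
    [CommRing R] (s t : R) {A B : Matrix n n R} (hA : A.trace = 0) (hB : B.trace = 0) :
    ((s • 1 + A) * (t • 1 + B)).trace = s * t * Fintype.card n + (A * B).trace := by
  simp only [add_mul, mul_add, smul_mul, Matrix.mul_smul, one_mul, mul_one, trace_add, trace_smul,
    trace_one, hA, hB, smul_eq_mul, mul_zero, add_zero, zero_add, mul_assoc, mul_left_comm t]

section Generators

variable {n ι : Type*} [Fintype n] [Fintype ι] {lam : ι → Matrix n n ℂ}

omit [Fintype ι] in
def blochVector (lam : ι → Matrix n n ℂ) (P : Matrix n n ℂ) : ι → ℝ :=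
  fun μ => (P * lam μ).trace.re

theorem trace_sum_smul_eq_zero (htraceless : ∀ μ, (lam μ).trace = 0) (c : ι → ℂ) :
    (∑ μ, c μ • lam μ).trace = 0 := by
  simp [trace_sum, trace_smul, htraceless]

variable [DecidableEq ι]

theorem trace_sum_smul_mul (horth : ∀ μ ν, (lam μ * lam ν).trace = if μ = ν then 2 else 0)
    (c : ι → ℂ) (μ : ι) : ((∑ ν, c ν • lam ν) * lam μ).trace = 2 * c μ := by
  simp [Finset.sum_mul, trace_sum, smul_mul, trace_smul, horth, mul_comm]

theorem trace_sum_smul_mul_sum_smul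
    (horth : ∀ μ ν, (lam μ * lam ν).trace = if μ = ν then 2 else 0) (a b : ι → ℂ) :
    ((∑ μ, a μ • lam μ) * ∑ ν, b ν • lam ν).trace = 2 * ∑ μ, a μ * b μ := by
  simp only [Matrix.mul_smul, trace_sum, trace_smul, trace_sum_smul_mul horth, smul_eq_mul,
    Finset.mul_sum]
  exact Finset.sum_congr rfl fun μ _ => by ring

variable [DecidableEq n]

omit [DecidableEq ι] in
theorem exists_eq_smul_one_add_sum [Nonempty n]
    (hcomplete : ∀ M : Matrix n n ℂ, M.IsHermitian → M.trace = 0 →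
      ∃ c : ι → ℝ, M = ∑ μ, (c μ : ℂ) • lam μ)
    {P : Matrix n n ℂ} (hP : P.IsHermitian) (hPtr : P.trace = 1) :
    ∃ c : ι → ℝ, P = (Fintype.card n : ℂ)⁻¹ • 1 + ∑ μ, (c μ : ℂ) • lam μ := by
  have hscalar : ((Fintype.card n : ℂ)⁻¹ • (1 : Matrix n n ℂ)).IsHermitian := by
    simp [IsHermitian, conjTranspose_smul]
  obtain ⟨c, hc⟩ := hcomplete _ (hP.sub hscalar) (by simp [hPtr])
  exact ⟨c, by rw [← hc, add_sub_cancel]⟩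

theorem blochVector_smul_one_add_sum (htraceless : ∀ μ, (lam μ).trace = 0)
    (horth : ∀ μ ν, (lam μ * lam ν).trace = if μ = ν then 2 else 0) (s : ℂ) (c : ι → ℝ) :
    blochVector lam (s • 1 + ∑ μ, (c μ : ℂ) • lam μ) = (2 : ℝ) • c := by
  ext μ
  rw [blochVector, add_mul, trace_add, smul_mul, one_mul, trace_smul, htraceless,
    trace_sum_smul_mul horth]
  simp

theorem blochVector_dotProduct_blochVector [Nonempty n]
    (htraceless : ∀ μ, (lam μ).trace = 0)
    (horth : ∀ μ ν, (lam μ * lam ν).trace = if μ = ν then 2 else 0)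
    (hcomplete : ∀ M : Matrix n n ℂ, M.IsHermitian → M.trace = 0 →
      ∃ c : ι → ℝ, M = ∑ μ, (c μ : ℂ) • lam μ)
    {P Q : Matrix n n ℂ} (hP : P.IsHermitian) (hPtr : P.trace = 1)
    (hQ : Q.IsHermitian) (hQtr : Q.trace = 1) :
    blochVector lam P ⬝ᵥ blochVector lam Q = 2 * (P * Q).trace.re - 2 / Fintype.card n := by
  obtain ⟨c, rfl⟩ := exists_eq_smul_one_add_sum hcomplete hP hPtr
  obtain ⟨d, rfl⟩ := exists_eq_smul_one_add_sum hcomplete hQ hQtr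
  rw [blochVector_smul_one_add_sum htraceless horth, blochVector_smul_one_add_sum htraceless horth,
    trace_smul_one_add_mul_smul_one_add _ _ (trace_sum_smul_eq_zero htraceless _)
      (trace_sum_smul_eq_zero htraceless _), trace_sum_smul_mul_sum_smul horth]
  have hcd : ∑ μ, (c μ : ℂ) * d μ = ((c ⬝ᵥ d : ℝ) : ℂ) := by simp [dotProduct]
  have hre : ((Fintype.card n : ℂ)⁻¹ * (Fintype.card n : ℂ)⁻¹ * Fintype.card n
      + 2 * ((c ⬝ᵥ d : ℝ) : ℂ)).re = (Fintype.card n : ℝ)⁻¹ + 2 * (c ⬝ᵥ d) := by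
    norm_num
  rw [hcd, hre, smul_dotProduct, dotProduct_smul, smul_eq_mul, smul_eq_mul, div_eq_mul_inv]
  ring

end Generators

theorem isHermitian_vecMulVec_self_star {n α : Type*} [Mul α] [StarMul α] (ψ : n → α) :
    (vecMulVec ψ (star ψ)).IsHermitian := by
  rw [IsHermitian, conjTranspose_vecMulVec, star_star]

section PureStates

variable {n : Type*} [Fintype n]

theorem star_dotProduct_self_eq_sum_norm_sq (ψ : n → ℂ) :
    star ψ ⬝ᵥ ψ = ((∑ k, ‖ψ k‖ ^ 2 : ℝ) : ℂ) := by
  simp [dotProduct, mul_comm, Complex.mul_conj']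

theorem trace_vecMulVec_self_star (ψ : n → ℂ) :
    (vecMulVec ψ (star ψ)).trace = ((∑ k, ‖ψ k‖ ^ 2 : ℝ) : ℂ) := by
  rw [trace_vecMulVec, dotProduct_comm, star_dotProduct_self_eq_sum_norm_sq]

theorem trace_vecMulVec_self_star_mul (φ ψ : n → ℂ) :
    (vecMulVec φ (star φ) * vecMulVec ψ (star ψ)).trace = ((‖star φ ⬝ᵥ ψ‖ ^ 2 : ℝ) : ℂ) := by
  rw [vecMulVec_mul_vecMulVec, trace_vecMulVec, dotProduct_smul, smul_eq_mul,
    dotProduct_comm φ, star_dotProduct ψ]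
  exact_mod_cast RCLike.mul_conj _

end PureStates

end Matrix

theorem sic_povm_bloch_simplex_general (N : ℕ) (hN : 2 ≤ N)
    (lam : Fin (N ^ 2 - 1) → Matrix (Fin N) (Fin N) ℂ)
    (htraceless : ∀ μ, (lam μ).trace = 0)
    (horth : ∀ μ ν, (lam μ * lam ν).trace = if μ = ν then 2 else 0)
    (hcomplete : ∀ M : Matrix (Fin N) (Fin N) ℂ, M.IsHermitian → M.trace = 0 →
      ∃ c : Fin (N ^ 2 - 1) → ℝ, M = ∑ μ, (c μ : ℂ) • lam μ)
    (ψ : Fin (N ^ 2) → Fin N → ℂ)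
    (hψ_unit : ∀ i, ∑ k, ‖ψ i k‖ ^ 2 = 1)
    (hψ_sic : ∀ i j, i ≠ j →
      ‖∑ k, (starRingEnd ℂ) (ψ i k) * ψ j k‖ ^ 2 = 1 / ((N : ℝ) + 1))
    (P : Fin (N ^ 2) → Matrix (Fin N) (Fin N) ℂ)
    (hP : ∀ i, P i = Matrix.vecMulVec (ψ i) (fun l => (starRingEnd ℂ) (ψ i l)))
    (r : Fin (N ^ 2) → Fin (N ^ 2 - 1) → ℝ)
    (hr : ∀ i μ, r i μ = ((P i * lam μ).trace).re) :
    (∀ i, ∑ μ, r i μ ^ 2 = 2 * ((N : ℝ) - 1) / N) ∧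
    (∀ i j, i ≠ j → ∑ μ, r i μ * r j μ = -2 / ((N : ℝ) * ((N : ℝ) + 1))) ∧
    (∀ i j, i ≠ j →
      (∑ μ, r i μ * r j μ) /
        (Real.sqrt (∑ μ, r i μ ^ 2) * Real.sqrt (∑ μ, r j μ ^ 2))
        = -1 / ((N : ℝ) ^ 2 - 1)) := by
  have : Nonempty (Fin N) := ⟨⟨0, by omega⟩⟩
  have hNR : (2 : ℝ) ≤ N := by exact_mod_cast hN
  replace hP : ∀ i, P i = vecMulVec (ψ i) (star (ψ i)) := hP
  have hstate : ∀ i, (P i).IsHermitian ∧ (P i).trace = 1 := fun i => by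
    rw [hP]
    exact ⟨isHermitian_vecMulVec_self_star (ψ i),
      by rw [trace_vecMulVec_self_star, hψ_unit, Complex.ofReal_one]⟩
  have hdot : ∀ i j, ∑ μ, r i μ * r j μ = 2 * ‖star (ψ i) ⬝ᵥ ψ j‖ ^ 2 - 2 / N := fun i j => by
    have hbloch : ∀ i, r i = blochVector lam (P i) := fun i => funext (hr i)
    rw [← dotProduct, hbloch, hbloch, blochVector_dotProduct_blochVector htraceless horth
      hcomplete (hstate i).1 (hstate i).2 (hstate j).1 (hstate j).2, hP, hP,
      trace_vecMulVec_self_star_mul, Complex.ofReal_re, Fintype.card_fin]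
  have hnorm : ∀ i, ∑ μ, r i μ ^ 2 = 2 * ((N : ℝ) - 1) / N := fun i => by
    simp_rw [sq (r i _)]
    rw [hdot, star_dotProduct_self_eq_sum_norm_sq, hψ_unit]
    field_simp
    norm_num
  have hoff : ∀ i j, i ≠ j → ∑ μ, r i μ * r j μ = -2 / ((N : ℝ) * ((N : ℝ) + 1)) :=
    fun i j hij => by
      have hsic : ‖star (ψ i) ⬝ᵥ ψ j‖ ^ 2 = 1 / ((N : ℝ) + 1) := hψ_sic i j hij
      rw [hdot, hsic]
      field_simp
      ring
  refine ⟨hnorm, hoff, fun i j hij => ?_⟩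
  rw [hnorm, hnorm, hoff i j hij, Real.mul_self_sqrt (div_nonneg (by linarith) (by linarith))]
  have : (N : ℝ) - 1 ≠ 0 := by linarith
  have : (N : ℝ) ^ 2 - 1 ≠ 0 := by nlinarith
  field_simp
  ring

/-- The Bloch vectors of the projectors of a SIC-POVM all
have squared length `2(N-1)/N`, pairwise dot products `-2/(N(N+1))`, and
hence their normalizations form a regular simplex in `ℝ^{N²-1}`. -/
theorem sic_povm_bloch_simplex (N : ℕ) (hN : 2 ≤ N)
    (lam : Fin (N ^ 2 - 1) → Matrix (Fin N) (Fin N) ℂ)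
    (hherm : ∀ μ, (lam μ).IsHermitian)
    (htraceless : ∀ μ, (lam μ).trace = 0)
    (horth : ∀ μ ν, (lam μ * lam ν).trace = if μ = ν then 2 else 0)
    (hcomplete : ∀ M : Matrix (Fin N) (Fin N) ℂ, M.IsHermitian → M.trace = 0 →
      ∃ c : Fin (N ^ 2 - 1) → ℝ, M = ∑ μ, (c μ : ℂ) • lam μ)
    (ψ : Fin (N ^ 2) → Fin N → ℂ)
    (hψ_unit : ∀ i, ∑ k, ‖ψ i k‖ ^ 2 = 1)
    (hψ_sic : ∀ i j, i ≠ j →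
      ‖∑ k, (starRingEnd ℂ) (ψ i k) * ψ j k‖ ^ 2 = 1 / ((N : ℝ) + 1))
    (P : Fin (N ^ 2) → Matrix (Fin N) (Fin N) ℂ)
    (hP : ∀ i, P i = Matrix.vecMulVec (ψ i) (fun l => (starRingEnd ℂ) (ψ i l)))
    (r : Fin (N ^ 2) → Fin (N ^ 2 - 1) → ℝ)
    (hr : ∀ i μ, r i μ = ((P i * lam μ).trace).re) :
    (∀ i, ∑ μ, r i μ ^ 2 = 2 * ((N : ℝ) - 1) / N) ∧
    (∀ i j, i ≠ j → ∑ μ, r i μ * r j μ = -2 / ((N : ℝ) * ((N : ℝ) + 1))) ∧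
    (∀ i j, i ≠ j →
      (∑ μ, r i μ * r j μ) /
        (Real.sqrt (∑ μ, r i μ ^ 2) * Real.sqrt (∑ μ, r j μ ^ 2))
        = -1 / ((N : ℝ) ^ 2 - 1)) :=
  sic_povm_bloch_simplex_general N hN lam htraceless horth hcomplete ψ hψ_unit hψ_sic P hP r hr
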